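/- arXiv:1110.4938 — 2 statements merged into one kernel-verified Lean document; each statement's English description precedes it below -/
import Mathlib

section
/- For any Borel probability measure ν on 𝕋, the normalized Cauchy transform z ↦ K(ξ̄ν)(z)/Kν(z) is well defined and complex differentiable at every point of the open unit disc 𝔻 (in particular Kν(z) ≠ 0 for z ∈ 𝔻), and it is bounded there: |K(ξ̄ν)(z)/Kν(z)| ≤ 1 for all z ∈ 𝔻. -/
open MeasureTheory Filter ContinuousLinearMap
open scoped ENNReal Topology ComplexConjugate

noncomputable section

/-- The Cauchy transform `K(fτ)(z) = ∫ f(ξ)/(1 - conj(ξ) z) dτ(ξ)` of the measure `fτ`. -/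
def cauchyT (τ : Measure ℂ) (f : ℂ → ℂ) (z : ℂ) : ℂ :=
  ∫ ξ, f ξ / (1 - conj ξ * z) ∂τ

/-- The function `ξ ↦ conj ξ`. -/
def xibarFun : ℂ → ℂ := fun ξ => conj ξ

/-- The constant function `1`. -/
def oneFun : ℂ → ℂ := fun _ => 1

/-- The operator `Û_γ = M_ξ + (γ - 1)⟨·, ξ̄⟩1` on `L²(μ)`, where `Mxi` is multiplication by
the independent variable, `xibar` is the function `ξ ↦ conj ξ` and `one` is the constant
function `1`.  (Here `⟨f, ξ̄⟩ = ∫ f(ξ) ξ dμ(ξ)` is linear in `f`.) -/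
def clarkOp (μ : Measure ℂ) (Mxi : Lp ℂ 2 μ →L[ℂ] Lp ℂ 2 μ) (xibar one : Lp ℂ 2 μ)
    (γ : ℂ) : Lp ℂ 2 μ →L[ℂ] Lp ℂ 2 μ :=
  Mxi + (γ - 1) • ((innerSL ℂ xibar).smulRight one)

/-- The scalar characteristic function
`θ(z) = ⟨(-U + z D₊ (I - z U*)⁻¹ D) ξ̄, 1⟩` of a contraction `U` on `L²(μ)` with defect
operators `Dm = (I - U*U)^{1/2}` and `Ds = (I - U U*)^{1/2}`. -/
def charF {μ : Measure ℂ} (U Dm Ds : Lp ℂ 2 μ →L[ℂ] Lp ℂ 2 μ) (xibar one : Lp ℂ 2 μ)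
    (z : ℂ) : ℂ :=
  inner ℂ one ((-U + z • (Ds ∘L Ring.inverse (1 - z • ContinuousLinearMap.adjoint U) ∘L Dm))
    xibar)

/-- `T^{(k)}`: nonnegative powers of `T`; powers of the adjoint for negative `k`. -/
def zpowOp {E : Type*} [NormedAddCommGroup E] [InnerProductSpace ℂ E] [CompleteSpace E]
    (T : E →L[ℂ] E) (k : ℤ) : E →L[ℂ] E :=
  if 0 ≤ k then T ^ k.toNat else (ContinuousLinearMap.adjoint T) ^ (-k).toNat

/-- Normalized Lebesgue (arclength) measure on the unit circle `𝕋`, as a measure on `ℂ`. -/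
def mCircle : Measure ℂ :=
  (ENNReal.ofReal (2 * Real.pi))⁻¹ •
    (volume.restrict (Set.Ioc (0:ℝ) (2 * Real.pi))).map (circleMap 0 1)

/-- A function on the disc is *inner* if its radial limits exist and have modulus one at
`m`-almost every point of the unit circle. -/
def IsInnerFun (f : ℂ → ℂ) : Prop :=
  ∀ᵐ ξ ∂mCircle, ∃ L : ℂ,
    Tendsto (fun r : ℝ => f ((r : ℂ) * ξ)) (𝓝[<] (1:ℝ)) (𝓝 L) ∧ ‖L‖ = 1

/-!
Since `ν` lives on `𝕋` and `Re (1 / (1 - u)) ≥ 1/2` for `|u| < 1`, the Cauchy transform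
`K = Kν` is holomorphic on `𝔻` with `Re K ≥ 1/2`; in particular `K ≠ 0` and `|K - 1| ≤ |K|`.
Hence `b = (K - 1) / K` maps `𝔻` into the closed unit disc with `b 0 = 0`, so `|b z| ≤ |z|`
by the Schwarz lemma. The kernel identity `z ξ̄ / (1 - ξ̄ z) = 1 / (1 - ξ̄ z) - 1` gives
`z K(ξ̄ν) = K - 1`, i.e. `K(ξ̄ν) / K = b z / z` for `z ≠ 0`; at `z = 0` the quotient is
`∫ ξ̄ dν`, of modulus at most `1`.
-/

open Metric

-- `Re (1 / (1 - u)) - 1/2 = (1 - |u|²) / (2 |1 - u|²)`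
theorem one_half_le_re_one_div_one_sub {u : ℂ} (hu : ‖u‖ < 1) : 1 / 2 ≤ (1 / (1 - u)).re := by
  have hu1 : 1 - u ≠ 0 := sub_ne_zero.mpr fun h => by simp [← h] at hu
  have hu2 : Complex.normSq u < 1 := by
    rw [Complex.normSq_eq_norm_sq]; nlinarith [norm_nonneg u]
  rw [one_div (1 - u), Complex.inv_re, le_div_iff₀ (Complex.normSq_pos.mpr hu1)]
  simp only [Complex.normSq_apply, Complex.sub_re, Complex.sub_im, Complex.one_re,
    Complex.one_im] at hu2 ⊢
  nlinarith

theorem norm_sub_one_le_norm_of_one_half_le_re {w : ℂ} (hw : 1 / 2 ≤ w.re) :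
    ‖w - 1‖ ≤ ‖w‖ := by
  rw [← sq_le_sq₀ (norm_nonneg _) (norm_nonneg _), Complex.sq_norm, Complex.sq_norm,
    Complex.normSq_apply, Complex.normSq_apply]
  simp only [Complex.sub_re, Complex.sub_im, Complex.one_re, Complex.one_im]
  nlinarith

theorem hasDerivAt_div_one_sub_mul (c a : ℂ) {w : ℂ} (hw : 1 - a * w ≠ 0) :
    HasDerivAt (fun w => c / (1 - a * w)) (c * a / (1 - a * w) ^ 2) w := by
  have h := ((hasDerivAt_id' w).const_mul a).const_sub 1 |>.inv hw |>.const_mul c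
  rw [neg_neg, mul_one, ← mul_div_assoc] at h
  exact h

section UnitCircle

variable {τ : Measure ℂ}

theorem sub_norm_le_norm_one_sub_conj_mul {ξ : ℂ} (hξ : ‖ξ‖ = 1) (w : ℂ) :
    1 - ‖w‖ ≤ ‖1 - conj ξ * w‖ := by
  simpa [hξ] using norm_sub_norm_le (1 : ℂ) (conj ξ * w)

theorem one_sub_conj_mul_ne_zero {ξ w : ℂ} (hξ : ‖ξ‖ = 1) (hw : ‖w‖ < 1) :
    1 - conj ξ * w ≠ 0 :=
  norm_pos_iff.mp ((sub_pos.mpr hw).trans_le (sub_norm_le_norm_one_sub_conj_mul hξ w))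

theorem integrable_cauchyKernel (hτ : ∀ᵐ ξ ∂τ, ‖ξ‖ = 1) {f : ℂ → ℂ} (hf : Integrable f τ)
    {w : ℂ} (hw : ‖w‖ < 1) :
    Integrable (fun ξ => f ξ / (1 - conj ξ * w)) τ := by
  simp_rw [div_eq_mul_inv]
  refine hf.mul_bdd (c := (1 - ‖w‖)⁻¹) (by fun_prop) ?_
  filter_upwards [hτ] with ξ hξ
  rw [norm_inv]
  exact inv_anti₀ (sub_pos.mpr hw) (sub_norm_le_norm_one_sub_conj_mul hξ w)

theorem hasDerivAt_cauchyT (hτ : ∀ᵐ ξ ∂τ, ‖ξ‖ = 1) {f : ℂ → ℂ} (hf : Integrable f τ)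
    {z : ℂ} (hz : ‖z‖ < 1) :
    HasDerivAt (cauchyT τ f) (∫ ξ, f ξ * conj ξ / (1 - conj ξ * z) ^ 2 ∂τ) z := by
  set δ := (1 - ‖z‖) / 2
  have hδ : 0 < δ := by simp only [δ]; linarith
  have hball : ∀ x ∈ ball z δ, δ ≤ 1 - ‖x‖ := fun x hx => by
    have := norm_le_norm_add_norm_sub' x z
    rw [mem_ball, dist_eq_norm] at hx
    simp only [δ] at hx ⊢; linarith
  refine (hasDerivAt_integral_of_dominated_loc_of_deriv_le
    (F := fun w ξ => f ξ / (1 - conj ξ * w))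
    (F' := fun w ξ => f ξ * conj ξ / (1 - conj ξ * w) ^ 2) (ball_mem_nhds z hδ)
    (.of_forall fun w => by simp_rw [div_eq_mul_inv]; exact hf.1.mul (by fun_prop))
    (integrable_cauchyKernel hτ hf hz)
    (by simp_rw [div_eq_mul_inv]; exact (hf.1.mul (by fun_prop)).mul (by fun_prop))
    (bound := fun ξ => ‖f ξ‖ / δ ^ 2) ?_ (hf.norm.div_const _) ?_).2
  · filter_upwards [hτ] with ξ hξ x hx
    have hden : δ ≤ ‖1 - conj ξ * x‖ :=
      (hball x hx).trans (sub_norm_le_norm_one_sub_conj_mul hξ x)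
    rw [norm_div, norm_mul, norm_pow, Complex.norm_conj, hξ, mul_one]
    gcongr
  · filter_upwards [hτ] with ξ hξ x hx
    exact hasDerivAt_div_one_sub_mul _ _ (one_sub_conj_mul_ne_zero hξ
      (by linarith [hball x hx]))

theorem differentiableOn_cauchyT (hτ : ∀ᵐ ξ ∂τ, ‖ξ‖ = 1) {f : ℂ → ℂ} (hf : Integrable f τ) :
    DifferentiableOn ℂ (cauchyT τ f) (ball 0 1) := fun _ hz =>
  (hasDerivAt_cauchyT hτ hf (mem_ball_zero_iff.mp hz)).differentiableAt.differentiableWithinAt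

theorem integrable_xibarFun [IsFiniteMeasure τ] (hτ : ∀ᵐ ξ ∂τ, ‖ξ‖ = 1) :
    Integrable xibarFun τ :=
  .of_bound Complex.continuous_conj.aestronglyMeasurable 1 <| by
    filter_upwards [hτ] with ξ hξ
    simp [xibarFun, hξ]

theorem cauchyT_zero (f : ℂ → ℂ) : cauchyT τ f 0 = ∫ ξ, f ξ ∂τ := by
  simp [cauchyT]

variable [IsProbabilityMeasure τ]

theorem cauchyT_one_zero : cauchyT τ oneFun 0 = 1 := by
  simp [cauchyT_zero, oneFun]

theorem one_half_le_re_cauchyT_one (hτ : ∀ᵐ ξ ∂τ, ‖ξ‖ = 1) {w : ℂ} (hw : ‖w‖ < 1) :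
    1 / 2 ≤ (cauchyT τ oneFun w).re := by
  have hint := integrable_cauchyKernel hτ (integrable_const (1 : ℂ)) hw
  calc 1 / 2 = ∫ _, (1 / 2 : ℝ) ∂τ := by simp
    _ ≤ ∫ ξ, (1 / (1 - conj ξ * w)).re ∂τ := by
      refine integral_mono_ae (integrable_const _) hint.re ?_
      filter_upwards [hτ] with ξ hξ
      exact one_half_le_re_one_div_one_sub (by simpa [hξ])
    _ = (cauchyT τ oneFun w).re := integral_re hint

theorem cauchyT_one_ne_zero (hτ : ∀ᵐ ξ ∂τ, ‖ξ‖ = 1) {w : ℂ} (hw : ‖w‖ < 1) :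
    cauchyT τ oneFun w ≠ 0 := fun h => by
  have h' := one_half_le_re_cauchyT_one hτ hw
  rw [h, Complex.zero_re] at h'
  norm_num at h'

theorem norm_cauchyT_one_sub_one_div_le (hτ : ∀ᵐ ξ ∂τ, ‖ξ‖ = 1) {z : ℂ} (hz : ‖z‖ < 1) :
    ‖(cauchyT τ oneFun z - 1) / cauchyT τ oneFun z‖ ≤ ‖z‖ := by
  have hK : DifferentiableOn ℂ (cauchyT τ oneFun) (ball 0 1) :=
    differentiableOn_cauchyT hτ (integrable_const 1)
  have hK0 : ∀ w ∈ ball (0 : ℂ) 1, cauchyT τ oneFun w ≠ 0 := fun w hw =>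
    cauchyT_one_ne_zero hτ (mem_ball_zero_iff.mp hw)
  refine Complex.norm_le_norm_of_mapsTo_ball ((hK.sub_const 1).div hK hK0) (fun w hw => ?_)
    (by simp [cauchyT_one_zero]) hz
  rw [mem_closedBall_zero_iff, Pi.div_apply, norm_div,
    div_le_one (norm_pos_iff.mpr (hK0 w hw))]
  exact norm_sub_one_le_norm_of_one_half_le_re
    (one_half_le_re_cauchyT_one hτ (mem_ball_zero_iff.mp hw))

theorem mul_cauchyT_xibarFun (hτ : ∀ᵐ ξ ∂τ, ‖ξ‖ = 1) {z : ℂ} (hz : ‖z‖ < 1) :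
    z * cauchyT τ xibarFun z = cauchyT τ oneFun z - 1 := by
  calc z * cauchyT τ xibarFun z = ∫ ξ, z * (conj ξ / (1 - conj ξ * z)) ∂τ :=
        (integral_const_mul _ _).symm
    _ = ∫ ξ, (1 / (1 - conj ξ * z) - 1) ∂τ := integral_congr_ae <| by
        filter_upwards [hτ] with ξ hξ
        rw [div_sub_one (one_sub_conj_mul_ne_zero hξ hz), mul_div_assoc']
        ring
    _ = cauchyT τ oneFun z - 1 := by
        rw [integral_sub (integrable_cauchyKernel hτ (integrable_const (1 : ℂ)) hz)
          (integrable_const 1)]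
        simp [cauchyT, oneFun]

end UnitCircle

theorem statement7
    (ν : Measure ℂ) [IsProbabilityMeasure ν] (hν : ν (Metric.sphere (0:ℂ) 1)ᶜ = 0)
    (z : ℂ) (hz : ‖z‖ < 1) :
    cauchyT ν oneFun z ≠ 0 ∧
    DifferentiableAt ℂ (fun w => cauchyT ν xibarFun w / cauchyT ν oneFun w) z ∧
    ‖cauchyT ν xibarFun z / cauchyT ν oneFun z‖ ≤ 1 := by
  have hsupp : ∀ᵐ ξ ∂ν, ‖ξ‖ = 1 :=
    (measure_eq_zero_iff_ae_notMem.mp hν).mono fun ξ hξ => by simpa using hξ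
  have hK := cauchyT_one_ne_zero hsupp hz
  have hdisc : ball (0 : ℂ) 1 ∈ 𝓝 z := isOpen_ball.mem_nhds (mem_ball_zero_iff.mpr hz)
  refine ⟨hK, ?_, ?_⟩
  · have hX := differentiableOn_cauchyT hsupp (integrable_xibarFun hsupp)
    have hK1 := differentiableOn_cauchyT hsupp (integrable_const (1 : ℂ))
    exact (hX.differentiableAt hdisc).div (hK1.differentiableAt hdisc) hK
  rcases eq_or_ne z 0 with rfl | hz0
  · rw [cauchyT_one_zero, div_one, cauchyT_zero]
    simpa using norm_integral_le_of_norm_le_const (C := 1) (μ := ν) (f := xibarFun) <| by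
      filter_upwards [hsupp] with ξ hξ
      simp [xibarFun, hξ]
  · have hschwarz := norm_cauchyT_one_sub_one_div_le hsupp hz
    rw [← mul_cauchyT_xibarFun hsupp hz, mul_div_assoc, norm_mul] at hschwarz
    exact le_of_mul_le_mul_left (by simpa using hschwarz) (norm_pos_iff.mpr hz0)
end
end

section
/- Let γ ∈ 𝕋 and ζ ∈ 𝕋, and let θ be the characteristic function of Û₀. If |Kμ_γ(rζ)| → ∞ as r → 1⁻, then the radial limit of the characteristic function satisfies lim_{r→1⁻} θ(rζ) = γ. -/
open MeasureTheory Filter ContinuousLinearMap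
open scoped ENNReal Topology ComplexConjugate

noncomputable section

/-!
Multiplication by `ξ` is unitary on `L²(μ)` and maps `ξ̄` to `1`, so `Û₀ ξ̄ = 0` and `Û₀* 1 = 0`.
Hence the defect operators fix `ξ̄` and `1`, and `θ(z) = z ⟨(I - z Û₀*)⁻¹ ξ̄, 1⟩`. The adjoints
`Û_γ*` and `Û₀*` differ by the rank-one operator `conj γ ⟨·, 1⟩ ξ̄`, and `I - z Û₀*` fixes `1`, so
comparing the two resolvents at `1` gives `Kμ_γ(z) (1 - conj γ θ(z)) = 1`; here
`Kμ_γ(z) = ⟨(I - z Û_γ*)⁻¹ 1, 1⟩` because both sides expand into the moments of `μ_γ`.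
Therefore `|θ(rζ) - γ| = 1 / |Kμ_γ(rζ)| → 0`.
-/
open InnerProductSpace

section Hilbert

variable {E : Type*} [NormedAddCommGroup E] [InnerProductSpace ℂ E]

theorem ContinuousLinearMap.IsPositive.apply_eq_self_of_apply_apply_eq {S : E →L[ℂ] E}
    (hS : S.IsPositive) {x : E} (hx : S (S x) = x) : S x = x := by
  set y := S x - x
  have hSy : S y = -y := by simp [y, hx]
  have h := hS.re_inner_nonneg_right y
  rw [hSy, inner_neg_right, map_neg, inner_self_eq_norm_sq_to_K] at h
  norm_cast at h
  have : ‖y‖ = 0 := by nlinarith [norm_nonneg y]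
  exact sub_eq_zero.mp (norm_eq_zero.mp this)

theorem ringInverse_apply_apply {T : E →L[ℂ] E} (hT : IsUnit T) (x : E) :
    Ring.inverse T (T x) = x := by
  rw [← mul_apply_eq_comp, Ring.inverse_mul_cancel T hT, one_apply_eq_self]

theorem apply_ringInverse_apply {T : E →L[ℂ] E} (hT : IsUnit T) (x : E) :
    T (Ring.inverse T x) = x := by
  rw [← mul_apply_eq_comp, Ring.mul_inverse_cancel T hT, one_apply_eq_self]

variable [CompleteSpace E]

theorem norm_smul_lt_one_of_norm_le_one {T : E →L[ℂ] E} (hT : ‖T‖ ≤ 1) {z : ℂ}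
    (hz : ‖z‖ < 1) : ‖z • T‖ < 1 :=
  (norm_smul z T).trans_lt (mul_lt_one_of_nonneg_of_lt_one_left (norm_nonneg z) hz hT)

theorem hasSum_inner_ringInverse_one_sub_smul {T : E →L[ℂ] E} (hT : ‖T‖ ≤ 1) {z : ℂ}
    (hz : ‖z‖ < 1) (u v : E) :
    HasSum (fun n : ℕ => z ^ n * ⟪u, (T ^ n) v⟫_ℂ) ⟪u, Ring.inverse (1 - z • T) v⟫_ℂ := by
  have h := (hasSum_geom_series_inverse (z • T) (norm_smul_lt_one_of_norm_le_one hT hz)).mapL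
    ((innerSL ℂ u).comp (ContinuousLinearMap.apply ℂ E v))
  simpa [smul_pow, inner_smul_right] using h

theorem ContinuousLinearMap.adjoint_apply_apply_of_mem_unitary {M : E →L[ℂ] E}
    (hM : M ∈ unitary (E →L[ℂ] E)) (x : E) : adjoint M (M x) = x := by
  rw [← comp_apply, ← star_eq_adjoint, ← mul_def, Unitary.star_mul_self_of_mem hM,
    one_apply_eq_self]

theorem ContinuousLinearMap.apply_adjoint_apply_of_mem_unitary {M : E →L[ℂ] E}
    (hM : M ∈ unitary (E →L[ℂ] E)) (x : E) : M (adjoint M x) = x := by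
  rw [← comp_apply, ← star_eq_adjoint, ← mul_def, Unitary.mul_star_self_of_mem hM,
    one_apply_eq_self]

end Hilbert

section ClarkOperator

variable {μ : Measure ℂ} {M : Lp ℂ 2 μ →L[ℂ] Lp ℂ 2 μ} {xibar one : Lp ℂ 2 μ}

theorem clarkOp_eq_add_rankOne (γ : ℂ) :
    clarkOp μ M xibar one γ = M + (γ - 1) • rankOne ℂ one xibar := rfl

theorem adjoint_clarkOp (γ : ℂ) :
    adjoint (clarkOp μ M xibar one γ) = adjoint M + (conj γ - 1) • rankOne ℂ xibar one := by
  simp [clarkOp_eq_add_rankOne, map_smulₛₗ]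

theorem clarkOp_apply (γ : ℂ) (g : Lp ℂ 2 μ) :
    clarkOp μ M xibar one γ g = M g + ((γ - 1) * ⟪xibar, g⟫_ℂ) • one := by
  simp [clarkOp_eq_add_rankOne, smul_smul]

theorem adjoint_clarkOp_apply (γ : ℂ) (g : Lp ℂ 2 μ) :
    adjoint (clarkOp μ M xibar one γ) g = adjoint M g + ((conj γ - 1) * ⟪one, g⟫_ℂ) • xibar := by
  simp [adjoint_clarkOp, smul_smul]

variable (hMx : M xibar = one) (hM : M ∈ unitary (Lp ℂ 2 μ →L[ℂ] Lp ℂ 2 μ))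
include hMx hM

theorem adjoint_apply_eq_of_apply_eq : adjoint M one = xibar := by
  rw [← hMx, adjoint_apply_apply_of_mem_unitary hM]

theorem inner_one_apply_eq (g : Lp ℂ 2 μ) : ⟪one, M g⟫_ℂ = ⟪xibar, g⟫_ℂ := by
  rw [← adjoint_inner_left, adjoint_apply_eq_of_apply_eq hMx hM]

variable (hone : ‖one‖ = 1)
include hone

theorem norm_eq_one_of_apply_eq : ‖xibar‖ = 1 := by
  rw [← hone, ← hMx, ContinuousLinearMap.norm_map_of_mem_unitary hM]

theorem adjoint_clarkOp_comp_clarkOp (γ : ℂ) :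
    adjoint (clarkOp μ M xibar one γ) ∘L clarkOp μ M xibar one γ
      = 1 + (conj γ * γ - 1) • rankOne ℂ xibar xibar := by
  ext1 g
  simp only [ContinuousLinearMap.comp_apply, adjoint_clarkOp_apply, clarkOp_apply, map_add,
    map_smul, adjoint_apply_apply_of_mem_unitary hM, adjoint_apply_eq_of_apply_eq hMx hM,
    inner_one_apply_eq hMx hM, inner_self_eq_norm_sq_to_K, hone]
  simp only [add_apply, one_apply_eq_self, smul_apply, rankOne_apply, smul_smul]
  module

theorem norm_clarkOp_apply_sq (γ : ℂ) (g : Lp ℂ 2 μ) :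
    ‖clarkOp μ M xibar one γ g‖ ^ 2 = ‖g‖ ^ 2 - (1 - ‖γ‖ ^ 2) * ‖⟪xibar, g⟫_ℂ‖ ^ 2 := by
  have h := congrArg (fun T => ⟪g, T g⟫_ℂ) (adjoint_clarkOp_comp_clarkOp hMx hM hone γ)
  simp only [comp_apply, adjoint_inner_right, add_apply, one_apply_eq_self, smul_apply,
    rankOne_apply, inner_add_right, inner_smul_right, inner_self_eq_norm_sq_to_K] at h
  rw [← inner_conj_symm xibar g, Complex.conj_mul', Complex.conj_mul', norm_inner_symm] at h
  have h' : ‖clarkOp μ M xibar one γ g‖ ^ 2 = ‖g‖ ^ 2 + (‖γ‖ ^ 2 - 1) * ‖⟪xibar, g⟫_ℂ‖ ^ 2 := by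
    apply_fun Complex.re at h
    simpa [← Complex.ofReal_pow] using h
  linear_combination h'

theorem norm_clarkOp_le_one {γ : ℂ} (hγ : ‖γ‖ ≤ 1) : ‖clarkOp μ M xibar one γ‖ ≤ 1 := by
  refine opNorm_le_bound _ zero_le_one fun g => ?_
  have hsq := norm_clarkOp_apply_sq hMx hM hone γ g
  have hγ2 : ‖γ‖ ^ 2 ≤ 1 := pow_le_one₀ (norm_nonneg γ) hγ
  rw [one_mul]
  exact pow_le_pow_iff_left₀ (norm_nonneg _) (norm_nonneg _) two_ne_zero |>.mp
    (by nlinarith [sq_nonneg ‖⟪xibar, g⟫_ℂ‖])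

theorem clarkOp_zero_apply_xibar : clarkOp μ M xibar one 0 xibar = 0 := by
  simp [clarkOp_apply, hMx, inner_self_eq_norm_sq_to_K, norm_eq_one_of_apply_eq hMx hM hone]

theorem adjoint_clarkOp_zero_apply_one : adjoint (clarkOp μ M xibar one 0) one = 0 := by
  simp [adjoint_clarkOp_apply, adjoint_apply_eq_of_apply_eq hMx hM, inner_self_eq_norm_sq_to_K,
    hone]

theorem charF_clarkOp_zero {D Ds : Lp ℂ 2 μ →L[ℂ] Lp ℂ 2 μ}
    (hD : D.IsPositive) (hDD : D ∘L D = 1 - adjoint (clarkOp μ M xibar one 0) ∘L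
      clarkOp μ M xibar one 0)
    (hDs : Ds.IsPositive) (hDsDs : Ds ∘L Ds = 1 - clarkOp μ M xibar one 0 ∘L
      adjoint (clarkOp μ M xibar one 0)) (z : ℂ) :
    charF (clarkOp μ M xibar one 0) D Ds xibar one z
      = z * ⟪one, Ring.inverse (1 - z • adjoint (clarkOp μ M xibar one 0)) xibar⟫_ℂ := by
  have hDx : D xibar = xibar := hD.apply_eq_self_of_apply_apply_eq <| by
    rw [← comp_apply, hDD]
    simp [clarkOp_zero_apply_xibar hMx hM hone]
  have hDs1 : Ds one = one := hDs.apply_eq_self_of_apply_apply_eq <| by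
    rw [← comp_apply, hDsDs]
    simp [adjoint_clarkOp_zero_apply_one hMx hM hone]
  rw [charF, add_apply, neg_apply, clarkOp_zero_apply_xibar hMx hM hone, neg_zero, zero_add,
    smul_apply, comp_apply, comp_apply, hDx, inner_smul_right, ← hDs.inner_left_eq_inner_right,
    hDs1]

theorem norm_adjoint_clarkOp_le_one {γ : ℂ} (hγ : ‖γ‖ ≤ 1) :
    ‖adjoint (clarkOp μ M xibar one γ)‖ ≤ 1 := by
  rw [adjoint.norm_map]
  exact norm_clarkOp_le_one hMx hM hone hγ

theorem inner_ringInverse_mul_one_sub_conj_mul_eq_one {γ : ℂ} (hγ : ‖γ‖ ≤ 1) {z : ℂ}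
    (hz : ‖z‖ < 1) :
    ⟪one, Ring.inverse (1 - z • adjoint (clarkOp μ M xibar one γ)) one⟫_ℂ *
      (1 - conj γ *
        (z * ⟪one, Ring.inverse (1 - z • adjoint (clarkOp μ M xibar one 0)) xibar⟫_ℂ)) = 1 := by
  set A := 1 - z • adjoint (clarkOp μ M xibar one 0)
  set B := 1 - z • adjoint (clarkOp μ M xibar one γ)
  have hA : IsUnit A := isUnit_one_sub_of_norm_lt_one <|
    norm_smul_lt_one_of_norm_le_one (norm_adjoint_clarkOp_le_one hMx hM hone (by simp)) hz
  have hB : IsUnit B := isUnit_one_sub_of_norm_lt_one <|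
    norm_smul_lt_one_of_norm_le_one (norm_adjoint_clarkOp_le_one hMx hM hone hγ) hz
  have hAB : ∀ g, A g = B g + (z * conj γ * ⟪one, g⟫_ℂ) • xibar := fun g => by
    simp only [A, B, sub_apply, one_apply_eq_self, smul_apply, adjoint_clarkOp_apply, map_zero]
    module
  have hA1 : Ring.inverse A one = one := by
    have : A one = one := by simp [A, adjoint_clarkOp_zero_apply_one hMx hM hone]
    conv_lhs => rw [← this]
    exact ringInverse_apply_apply hA one
  set u := Ring.inverse B one
  have hu : u = one + (z * conj γ * ⟪one, u⟫_ℂ) • Ring.inverse A xibar := by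
    conv_lhs => rw [← ringInverse_apply_apply hA u, hAB, apply_ringInverse_apply hB]
    rw [map_add, map_smul, hA1]
  have h := congrArg (⟪one, ·⟫_ℂ) hu
  simp only [inner_add_right, inner_smul_right, inner_self_eq_norm_sq_to_K, hone,
    RCLike.ofReal_one, one_pow] at h
  linear_combination h

end ClarkOperator

section CauchyTransform

theorem ae_norm_eq_one_of_measure_compl_sphere {τ : Measure ℂ}
    (hτ : τ (Metric.sphere (0 : ℂ) 1)ᶜ = 0) : ∀ᵐ ξ ∂τ, ‖ξ‖ = 1 := by
  filter_upwards [measure_eq_zero_iff_ae_notMem.mp hτ] with ξ hξ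
  simpa using hξ

theorem hasSum_cauchyT_oneFun {τ : Measure ℂ} [IsFiniteMeasure τ] (hτ : ∀ᵐ ξ ∂τ, ‖ξ‖ = 1)
    {z : ℂ} (hz : ‖z‖ < 1) :
    HasSum (fun n : ℕ => z ^ n * ∫ ξ, conj ξ ^ n ∂τ) (cauchyT τ oneFun z) := by
  have hgeom : ∀ᵐ ξ ∂τ,
      HasSum (fun n : ℕ => z ^ n * conj ξ ^ n) (oneFun ξ / (1 - conj ξ * z)) := by
    filter_upwards [hτ] with ξ hξ
    have hlt : ‖conj ξ * z‖ < 1 := by simpa [hξ] using hz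
    simpa [oneFun, div_eq_inv_mul, mul_pow, mul_comm] using hasSum_geometric_of_norm_lt_one hlt
  have h := hasSum_integral_of_dominated_convergence (fun n _ => ‖z‖ ^ n) (fun n => by fun_prop)
    (fun n => by filter_upwards [hτ] with ξ hξ; simp [hξ])
    (.of_forall fun _ => summable_geometric_of_lt_one (norm_nonneg z) hz)
    (integrable_const _) hgeom
  simp only [integral_const_mul] at h
  exact h

variable {E : Type*} [NormedAddCommGroup E] [InnerProductSpace ℂ E] [CompleteSpace E]

theorem zpowOp_neg_natCast (T : E →L[ℂ] E) (n : ℕ) : zpowOp T (-n) = adjoint T ^ n := by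
  rcases n.eq_zero_or_pos with rfl | hn
  · simp [zpowOp]
  · simp [zpowOp, hn.ne']

theorem inner_ringInverse_adjoint_eq_cauchyT {T : E →L[ℂ] E} (hT : ‖T‖ ≤ 1) {v : E}
    {τ : Measure ℂ} [IsFiniteMeasure τ] (hτ : ∀ᵐ ξ ∂τ, ‖ξ‖ = 1)
    (hmom : ∀ k : ℤ, ⟪v, zpowOp T k v⟫_ℂ = ∫ ξ, ξ ^ k ∂τ) {z : ℂ} (hz : ‖z‖ < 1) :
    ⟪v, Ring.inverse (1 - z • adjoint T) v⟫_ℂ = cauchyT τ oneFun z := by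
  refine (hasSum_inner_ringInverse_one_sub_smul (by rwa [adjoint.norm_map]) hz v v).unique ?_
  convert hasSum_cauchyT_oneFun hτ hz using 3 with n
  rw [← zpowOp_neg_natCast, hmom]
  refine integral_congr_ae ?_
  filter_upwards [hτ] with ξ hξ
  rw [zpow_neg, zpow_natCast, ← inv_pow, Complex.inv_eq_conj hξ]

end CauchyTransform

section MultiplicationOperator

variable {μ : Measure ℂ}

theorem Lp.norm_eq_one_of_ae_eq_one [IsProbabilityMeasure μ] {g : Lp ℂ 2 μ}
    (hg : ∀ᵐ ξ ∂μ, g ξ = 1) : ‖g‖ = 1 := by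
  rw [Lp.norm_def, eLpNorm_congr_ae hg, eLpNorm_const _ two_ne_zero (NeZero.ne μ)]
  simp

variable {M : Lp ℂ 2 μ →L[ℂ] Lp ℂ 2 μ} (hμ : ∀ᵐ ξ ∂μ, ‖ξ‖ = 1)
  (hM : ∀ f : Lp ℂ 2 μ, ∀ᵐ ξ ∂μ, M f ξ = ξ * f ξ)
include hμ hM

theorem inner_mulCoord_mulCoord (f g : Lp ℂ 2 μ) : ⟪M f, M g⟫_ℂ = ⟪f, g⟫_ℂ := by
  rw [L2.inner_def, L2.inner_def]
  refine integral_congr_ae ?_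
  filter_upwards [hμ, hM f, hM g] with ξ hξ hf hg
  simp only [hf, hg, RCLike.inner_apply, map_mul]
  have hξ' : conj ξ * ξ = 1 := by simp [Complex.conj_mul', hξ]
  linear_combination (g ξ * conj (f ξ)) * hξ'

theorem exists_mulCoord_eq (g : Lp ℂ 2 μ) : ∃ f, M f = g := by
  have hmem : MemLp (fun ξ => conj ξ * g ξ) 2 μ := by
    refine (Lp.memLp g).of_le (by fun_prop) ?_
    filter_upwards [hμ] with ξ hξ
    simp [hξ]
  refine ⟨hmem.toLp _, Lp.ext ?_⟩
  filter_upwards [hM (hmem.toLp _), hmem.coeFn_toLp, hμ] with ξ h1 h2 h3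
  rw [h1, h2, ← mul_assoc, Complex.mul_conj', h3]
  simp

theorem mulCoord_mem_unitary : M ∈ unitary (Lp ℂ 2 μ →L[ℂ] Lp ℂ 2 μ) := by
  have hiso : adjoint M ∘L M = 1 :=
    (inner_map_map_iff_adjoint_comp_self M).mp (inner_mulCoord_mulCoord hμ hM)
  refine ⟨by rwa [star_eq_adjoint], ?_⟩
  ext1 g
  obtain ⟨f, rfl⟩ := exists_mulCoord_eq hμ hM g
  rw [star_eq_adjoint, mul_apply_eq_comp, ← comp_apply (adjoint M), hiso, one_apply_eq_self,
    one_apply_eq_self]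

theorem mulCoord_eq_of_ae_eq {xibar one : Lp ℂ 2 μ} (hxibar : ∀ᵐ ξ ∂μ, xibar ξ = conj ξ)
    (hone : ∀ᵐ ξ ∂μ, one ξ = 1) : M xibar = one := by
  refine Lp.ext ?_
  filter_upwards [hM xibar, hxibar, hone, hμ] with ξ h1 h2 h3 h4
  rw [h1, h2, h3, Complex.mul_conj', h4]
  simp

end MultiplicationOperator

theorem tendsto_nhds_of_mul_one_sub_conj_mul_eq_one {α : Type*} {l : Filter α} {G θ : α → ℂ}
    {γ : ℂ} (hγ : ‖γ‖ = 1) (hG : Tendsto (fun r => ‖G r‖) l atTop)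
    (h : ∀ᶠ r in l, G r * (1 - conj γ * θ r) = 1) : Tendsto θ l (𝓝 γ) := by
  have hinv : Tendsto (fun r => (G r)⁻¹) l (𝓝 0) := by
    rw [tendsto_zero_iff_norm_tendsto_zero]
    exact hG.inv_tendsto_atTop.congr fun r => (norm_inv (G r)).symm
  have hθ : (fun r => γ - γ * (G r)⁻¹) =ᶠ[l] θ := by
    filter_upwards [h] with r hr
    have hG0 : G r ≠ 0 := left_ne_zero_of_mul_eq_one hr
    have hγγ : γ * conj γ = 1 := by simp [Complex.mul_conj', hγ]
    field_simp
    linear_combination γ * hr + (G r * θ r) * hγγ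
  simpa using (tendsto_const_nhds.sub (tendsto_const_nhds.mul hinv)).congr' hθ

theorem statement9
    (μ : Measure ℂ) [IsProbabilityMeasure μ] (hμ : μ (Metric.sphere (0:ℂ) 1)ᶜ = 0)
    (Mxi : Lp ℂ 2 μ →L[ℂ] Lp ℂ 2 μ)
    (hMxi : ∀ f : Lp ℂ 2 μ, ∀ᵐ ξ ∂μ, (Mxi f) ξ = ξ * f ξ)
    (one xibar : Lp ℂ 2 μ)
    (hone : ∀ᵐ ξ ∂μ, one ξ = 1) (hxibar : ∀ᵐ ξ ∂μ, xibar ξ = conj ξ)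
    -- `D0` and `Ds0` are the positive square roots of `I - Û₀* Û₀` and `I - Û₀ Û₀*`
    (D0 Ds0 : Lp ℂ 2 μ →L[ℂ] Lp ℂ 2 μ)
    (hD0pos : D0.IsPositive)
    (hD0 : D0 ∘L D0 = 1 - ContinuousLinearMap.adjoint (clarkOp μ Mxi xibar one 0) ∘L
      clarkOp μ Mxi xibar one 0)
    (hDs0pos : Ds0.IsPositive)
    (hDs0 : Ds0 ∘L Ds0 = 1 - clarkOp μ Mxi xibar one 0 ∘L
      ContinuousLinearMap.adjoint (clarkOp μ Mxi xibar one 0))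
    (γ : ℂ) (hγ : ‖γ‖ = 1) (ζ : ℂ) (hζ : ‖ζ‖ = 1)
    -- `μγ` is the spectral measure of `Û_γ` with respect to the cyclic vector `1`
    (μγ : Measure ℂ) [IsProbabilityMeasure μγ] (hμγsupp : μγ (Metric.sphere (0:ℂ) 1)ᶜ = 0)
    (hμγmom : ∀ k : ℤ,
      (inner ℂ one (zpowOp (clarkOp μ Mxi xibar one γ) k one) : ℂ) = ∫ ξ, ξ ^ k ∂μγ)
    (hblow : Tendsto (fun r : ℝ => ‖cauchyT μγ oneFun ((r : ℂ) * ζ)‖)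
      (𝓝[<] (1:ℝ)) atTop) :
    Tendsto (fun r : ℝ => charF (clarkOp μ Mxi xibar one 0) D0 Ds0 xibar one ((r : ℂ) * ζ))
      (𝓝[<] (1:ℝ)) (𝓝 γ) := by
  have hcirc := ae_norm_eq_one_of_measure_compl_sphere hμ
  have hM := mulCoord_mem_unitary hcirc hMxi
  have hMx := mulCoord_eq_of_ae_eq hcirc hMxi hxibar hone
  have hone1 := Lp.norm_eq_one_of_ae_eq_one hone
  refine tendsto_nhds_of_mul_one_sub_conj_mul_eq_one hγ hblow ?_
  filter_upwards [Ioo_mem_nhdsLT (show (0 : ℝ) < 1 by norm_num)] with r hr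
  have hz : ‖(r : ℂ) * ζ‖ < 1 := by simp [hζ, abs_of_pos hr.1, hr.2]
  rw [charF_clarkOp_zero hMx hM hone1 hD0pos hD0 hDs0pos hDs0,
    ← inner_ringInverse_adjoint_eq_cauchyT (norm_clarkOp_le_one hMx hM hone1 hγ.le)
      (ae_norm_eq_one_of_measure_compl_sphere hμγsupp) hμγmom hz]
  exact inner_ringInverse_mul_one_sub_conj_mul_eq_one hMx hM hone1 hγ.le hz
end
end
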